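/- There exists a real constant C such that for every positive integer n, B(√2, n) ≥ n^{1/2} − C; that is, B(√2, n) ≥ n^{1/2} + O(1). -/

import Mathlib

/-- `binaryOnes x n` is `B(x, n)`: the number of `1`'s among the first `n` binary digits of `x`
after the binary point, i.e. the number of `i` with `1 ≤ i ≤ n` and `⌊2^i·x⌋ mod 2 = 1`. -/
noncomputable def binaryOnes (x : ℝ) (n : ℕ) : ℕ :=
  ((Finset.Icc 1 n).filter fun i => ⌊(2 : ℝ) ^ i * x⌋ % 2 = 1).card

/-!
Let `a = ⌊2 ^ n √2⌋`. Its binary expansion is `1` followed by the first `n` binary digits of `√2`,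
so its digit sum is `B(√2, n) + 1`. On the other hand `a² < 2 ^ (2n+1) < a² + 2 ^ (n+2)`, so the
top `n - 1` binary digits of `a²` are all `1`. Since carries only destroy ones, the binary digit
sum is submultiplicative, whence `n - 1 ≤ (B(√2, n) + 1)²`.
-/

namespace Nat

section Base

variable {b : ℕ}

theorem digits_sum_add_base_mul (hb : 1 < b) {x : ℕ} (hx : x < b) (y : ℕ) :
    (b.digits (x + b * y)).sum = x + (b.digits y).sum := by
  by_cases hxy : x ≠ 0 ∨ y ≠ 0
  · rw [digits_add b hb x y hx hxy, List.sum_cons]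
  · obtain ⟨rfl, rfl⟩ : x = 0 ∧ y = 0 := by tauto
    simp

theorem digits_sum_base_mul (hb : 1 < b) (m : ℕ) :
    (b.digits (b * m)).sum = (b.digits m).sum := by
  simpa using digits_sum_add_base_mul hb (zero_lt_of_lt hb) m

theorem digits_sum_div_pow_le (hb : 1 < b) (m : ℕ) :
    ∀ j, (b.digits (m / b ^ j)).sum ≤ (b.digits m).sum
  | 0 => by simp
  | j + 1 => by
    have hsplit :=
      digits_sum_add_base_mul hb (mod_lt (m / b ^ j) (zero_lt_of_lt hb)) (m / b ^ j / b)
    rw [mod_add_div] at hsplit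
    rw [pow_succ, ← Nat.div_div_eq_div_mul]
    exact (Nat.le_add_left _ _).trans (hsplit ▸ digits_sum_div_pow_le hb m j)

theorem digits_sum_pow_sub_one (hb : 1 < b) : ∀ k, (b.digits (b ^ k - 1)).sum = k * (b - 1)
  | 0 => by simp
  | k + 1 => by
    have hpow : b ^ (k + 1) - 1 = (b - 1) + b * (b ^ k - 1) := by
      have := one_le_pow k b (zero_lt_of_lt hb)
      zify [this, one_le_pow (k + 1) b (zero_lt_of_lt hb), hb.le]
      ring
    rw [hpow, digits_sum_add_base_mul hb (by omega), digits_sum_pow_sub_one hb k]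
    ring

/-- A number just below `b ^ (j + k)` has its top `k` digits equal to `b - 1`. -/
theorem mul_pred_le_digits_sum (hb : 1 < b) {j k m : ℕ} (hlo : b ^ (j + k) - b ^ j ≤ m)
    (hhi : m < b ^ (j + k)) : k * (b - 1) ≤ (b.digits m).sum := by
  have hdiv : m / b ^ j = b ^ k - 1 := by
    apply Nat.div_eq_of_lt_le
    · rwa [Nat.sub_mul, one_mul, ← pow_add, add_comm k]
    · rwa [Nat.sub_add_cancel (one_le_pow k b (zero_lt_of_lt hb)), ← pow_add, add_comm k]
  rw [← digits_sum_pow_sub_one hb, ← hdiv]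
  exact digits_sum_div_pow_le hb m j

end Base

section Prime

variable {p : ℕ} [Fact p.Prime]

/-- Legendre's formula turns `m ! * n ! ∣ (m + n)!` into subadditivity of the digit sum. -/
theorem digits_sum_add_le (m n : ℕ) :
    (p.digits (m + n)).sum ≤ (p.digits m).sum + (p.digits n).sum := by
  have hval : padicValNat p (m + n)! =
      padicValNat p ((m + n).choose n) + padicValNat p m ! + padicValNat p n ! := by
    rw [← add_choose_mul_factorial_mul_factorial, padicValNat.mul
      (mul_ne_zero (choose_pos (le_add_left n m)).ne' m.factorial_ne_zero) n.factorial_ne_zero,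
      padicValNat.mul (choose_pos (le_add_left n m)).ne' m.factorial_ne_zero]
  have hlegendre := congrArg ((p - 1) * ·) hval
  simp only [mul_add, sub_one_mul_padicValNat_factorial] at hlegendre
  have := digit_sum_le p m
  have := digit_sum_le p n
  have := digit_sum_le p (m + n)
  omega

theorem digits_sum_mul_le_mul (a : ℕ) : ∀ d, (p.digits (a * d)).sum ≤ (p.digits a).sum * d
  | 0 => by simp
  | d + 1 => by
    rw [mul_add_one, mul_add_one]
    exact (digits_sum_add_le _ _).trans (Nat.add_le_add_right (digits_sum_mul_le_mul a d) _)

theorem digits_sum_mul_ofDigits_le (a : ℕ) :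
    ∀ L : List ℕ, (p.digits (a * ofDigits p L)).sum ≤ (p.digits a).sum * L.sum
  | [] => by simp
  | d :: L => by
    have hp : 1 < p := (Fact.out : p.Prime).one_lt
    rw [ofDigits_cons, mul_add, mul_left_comm, List.sum_cons, mul_add]
    calc (p.digits (a * d + p * (a * ofDigits p L))).sum
        ≤ (p.digits (a * d)).sum + (p.digits (a * ofDigits p L)).sum := by
          rw [← digits_sum_base_mul hp (a * ofDigits p L)]
          exact digits_sum_add_le _ _
      _ ≤ (p.digits a).sum * d + (p.digits a).sum * L.sum :=
          Nat.add_le_add (digits_sum_mul_le_mul a d) (digits_sum_mul_ofDigits_le a L)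

theorem digits_sum_mul_le (a b : ℕ) :
    (p.digits (a * b)).sum ≤ (p.digits a).sum * (p.digits b).sum := by
  simpa only [ofDigits_digits] using digits_sum_mul_ofDigits_le (p := p) a (p.digits b)

end Prime

end Nat

theorem binaryOnes_succ (x : ℝ) (n : ℕ) :
    binaryOnes x (n + 1) = binaryOnes x n + if ⌊(2 : ℝ) ^ (n + 1) * x⌋ % 2 = 1 then 1 else 0 := by
  unfold binaryOnes
  rw [← Finset.insert_Icc_right_eq_Icc_add_one (by omega : 1 ≤ n + 1), Finset.filter_insert]
  split
  · rw [Finset.card_insert_of_notMem (by simp)]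
  · simp

theorem floor_two_pow_succ_mul (x : ℝ) (n : ℕ) :
    ⌊(2 : ℝ) ^ (n + 1) * x⌋₊ = ⌊(2 : ℝ) ^ (n + 1) * x⌋₊ % 2 + 2 * ⌊(2 : ℝ) ^ n * x⌋₊ := by
  have hdiv : ⌊(2 : ℝ) ^ n * x⌋₊ = ⌊(2 : ℝ) ^ (n + 1) * x⌋₊ / 2 := by
    rw [← Nat.floor_div_natCast, pow_succ]
    congr 1
    push_cast
    ring
  rw [hdiv, Nat.mod_add_div]

/-- Multiplying by `2 ^ n` moves the first `n` binary digits of `x` into the integer part. -/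
theorem digits_sum_floor_two_pow_mul {x : ℝ} (hx : 0 ≤ x) (n : ℕ) :
    (Nat.digits 2 ⌊(2 : ℝ) ^ n * x⌋₊).sum = (Nat.digits 2 ⌊x⌋₊).sum + binaryOnes x n := by
  induction n with
  | zero => simp [binaryOnes]
  | succ n ih =>
    have hbit : ⌊(2 : ℝ) ^ (n + 1) * x⌋ % 2 = 1 ↔ ⌊(2 : ℝ) ^ (n + 1) * x⌋₊ % 2 = 1 := by
      rw [← Int.natCast_floor_eq_floor (by positivity)]
      omega
    rw [floor_two_pow_succ_mul, Nat.digits_sum_add_base_mul one_lt_two (Nat.mod_lt _ two_pos),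
      ih, binaryOnes_succ]
    simp only [hbit]
    split <;> omega

theorem floor_sqrt_two : ⌊√2⌋₊ = 1 := by
  rw [Nat.floor_eq_iff (by positivity)]
  constructor <;> norm_num [Real.le_sqrt, Real.sqrt_lt']

theorem sq_floor_two_pow_mul_sqrt_two_bounds (n : ℕ) :
    ⌊(2 : ℝ) ^ n * √2⌋₊ ^ 2 < 2 ^ (2 * n + 1) ∧
      2 ^ (2 * n + 1) < ⌊(2 : ℝ) ^ n * √2⌋₊ ^ 2 + 2 ^ (n + 2) := by
  set y := (2 : ℝ) ^ n * √2
  set a := ⌊y⌋₊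
  have hy_sq : y ^ 2 = 2 ^ (2 * n + 1) := by
    rw [mul_pow, Real.sq_sqrt zero_le_two]
    ring
  have hy_irr : Irrational y := by
    simpa [y] using irrational_sqrt_two.natCast_mul (pow_ne_zero n two_ne_zero)
  have ha_lt : (a : ℝ) < y := (Nat.floor_le (by positivity)).lt_of_ne (hy_irr.ne_nat a).symm
  have hy_lt : y < a + 1 := Nat.lt_floor_add_one y
  have hy_lt_pow : y < 2 ^ (n + 1) := by
    rw [pow_succ]
    exact mul_lt_mul_of_pos_left (by norm_num [Real.sqrt_lt']) (by positivity)
  constructor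
  · exact_mod_cast hy_sq ▸ pow_lt_pow_left₀ ha_lt a.cast_nonneg two_ne_zero
  · have : (2 : ℝ) ^ (2 * n + 1) < a ^ 2 + 2 ^ (n + 2) := by
      rw [← hy_sq, pow_succ 2 (n + 1)]
      nlinarith
    exact_mod_cast this

/-- There is a real constant `C` such that `B(√2, n) ≥ n^{1/2} − C` for every positive
integer `n`; that is, `B(√2, n) ≥ n^{1/2} + O(1)`. -/
theorem stmt_14 : ∃ C : ℝ, ∀ n : ℕ, 0 < n →
    Real.sqrt n - C ≤ (binaryOnes (Real.sqrt 2) n : ℝ) := by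
  refine ⟨2, fun n hn => ?_⟩
  set a := ⌊(2 : ℝ) ^ n * √2⌋₊
  set B := binaryOnes √2 n
  have hsum : (Nat.digits 2 a).sum = B + 1 := by
    rw [digits_sum_floor_two_pow_mul (by positivity), floor_sqrt_two,
      Nat.digits_of_lt 2 1 one_ne_zero one_lt_two, List.sum_singleton, add_comm]
  obtain ⟨hhi, hlo⟩ := sq_floor_two_pow_mul_sqrt_two_bounds n
  have hexp : n + 2 + (n - 1) = 2 * n + 1 := by omega
  have hlower : (n - 1) * (2 - 1) ≤ (Nat.digits 2 (a ^ 2)).sum :=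
    Nat.mul_pred_le_digits_sum one_lt_two (hexp ▸ Nat.sub_le_of_le_add hlo.le) (hexp ▸ hhi)
  have hupper : (Nat.digits 2 (a ^ 2)).sum ≤ (B + 1) ^ 2 := by
    rw [sq, sq, ← hsum]
    exact Nat.digits_sum_mul_le a a
  have hn_le : (n : ℝ) ≤ (B + 2) ^ 2 := by
    have : n ≤ (B + 2) ^ 2 := by nlinarith
    exact_mod_cast this
  linarith [(Real.sqrt_le_left (by positivity)).mpr hn_le]
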